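/- arXiv:math/0604347 — 4 statements merged into one kernel-verified Lean document; each statement's English description precedes it below -/
import Mathlib

section
/- Assume the minimal-counterexample hypothesis. Then k ≥ 4. -/
/-- The congruence class of `a` modulo `m`, as a set of integers. -/
def congClass (a : ℤ) (m : ℕ) : Set ℤ :=
  {x : ℤ | Int.ModEq (m : ℤ) x a}

/-- `k` is a counterexample to the Disjoint Congruence Classes Conjecture:
there are `k` pairwise disjoint congruence classes whose moduli have pairwise
gcds all strictly less than `k`. -/
def IsCounterexample (k : ℕ) : Prop :=
  ∃ (a : Fin k → ℤ) (m : Fin k → ℕ),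
    (∀ i, 0 < m i) ∧
    (∀ i j, i ≠ j → Disjoint (congClass (a i) (m i)) (congClass (a j) (m j))) ∧
    (∀ i j, i ≠ j → Nat.gcd (m i) (m j) < k)

/-!
Two classes `a (mod m)` and `b (mod n)` meet as soon as `gcd m n ∣ a - b` (Bézout), so in a
disjoint system every pairwise gcd is at least `2`, and if all pairwise gcds divide `n` the
residues `a i (mod n)` are pairwise distinct, leaving room for at most `n` classes. For `k ≤ 3`
the pairwise gcds lie in `[2, k)`, hence all equal `2`, so `k ≤ 2`, and then no gcd fits in `[2, k)`.
-/

theorem not_dvd_sub_of_disjoint_congClass {a b : ℤ} {m n : ℕ}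
    (h : Disjoint (congClass a m) (congClass b n)) : ¬ (Nat.gcd m n : ℤ) ∣ a - b := by
  rintro ⟨t, ht⟩
  have hbezout : (Nat.gcd m n : ℤ) = m * Int.gcdA m n + n * Int.gcdB m n := by
    simpa [Int.gcd_natCast_natCast] using Int.gcd_eq_gcd_ab (m : ℤ) (n : ℤ)
  have hx_mem_left : a - m * Int.gcdA m n * t ∈ congClass a m :=
    Int.modEq_iff_dvd.mpr ⟨Int.gcdA m n * t, by ring⟩
  have hx_mem_right : a - m * Int.gcdA m n * t ∈ congClass b n :=
    Int.modEq_iff_dvd.mpr ⟨-(Int.gcdB m n * t), by linear_combination -ht - t * hbezout⟩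
  exact Set.disjoint_left.mp h hx_mem_left hx_mem_right

theorem two_le_gcd_of_disjoint_congClass {a b : ℤ} {m n : ℕ} (hm : 0 < m)
    (h : Disjoint (congClass a m) (congClass b n)) : 2 ≤ Nat.gcd m n := by
  have hpos : 0 < Nat.gcd m n := Nat.gcd_pos_of_pos_left n hm
  have hne_one : Nat.gcd m n ≠ 1 := fun h1 =>
    not_dvd_sub_of_disjoint_congClass h (by rw [h1]; exact_mod_cast one_dvd _)
  omega

theorem card_le_of_pairwise_disjoint_congClass {ι : Type*} [Fintype ι] (a : ι → ℤ) (m : ι → ℕ)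
    (n : ℕ) [NeZero n]
    (hdisj : ∀ i j, i ≠ j → Disjoint (congClass (a i) (m i)) (congClass (a j) (m j)))
    (hdvd : ∀ i j, i ≠ j → Nat.gcd (m i) (m j) ∣ n) :
    Fintype.card ι ≤ n := by
  have hinj : Function.Injective fun i => (a i : ZMod n) := by
    intro i j hij
    by_contra hne
    have hn_dvd : (n : ℤ) ∣ a i - a j :=
      (ZMod.intCast_eq_intCast_iff_dvd_sub _ _ n).mp hij.symm
    exact not_dvd_sub_of_disjoint_congClass (hdisj i j hne)
      ((Int.natCast_dvd_natCast.mpr (hdvd i j hne)).trans hn_dvd)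
  simpa [ZMod.card] using Fintype.card_le_of_injective _ hinj

theorem min_ce_k_ge_four_general (k : ℕ) (a : Fin k → ℤ) (m : Fin k → ℕ)
    (hk : 2 ≤ k)
    (hm : ∀ i, 0 < m i)
    (hdisj : ∀ i j, i ≠ j → Disjoint (congClass (a i) (m i)) (congClass (a j) (m j)))
    (hgcd : ∀ i j, i ≠ j → Nat.gcd (m i) (m j) < k) :
    4 ≤ k := by
  have htwo_le : ∀ i j, i ≠ j → 2 ≤ Nat.gcd (m i) (m j) := fun i j hij =>
    two_le_gcd_of_disjoint_congClass (hm i) (hdisj i j hij)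
  by_contra hlt
  have hdvd_two : ∀ i j, i ≠ j → Nat.gcd (m i) (m j) ∣ 2 := by
    intro i j hij
    have := htwo_le i j hij
    have := hgcd i j hij
    rw [show Nat.gcd (m i) (m j) = 2 by omega]
  have hk_le_two : k ≤ 2 := by
    simpa using card_le_of_pairwise_disjoint_congClass a m 2 hdisj hdvd_two
  have hne : (⟨0, by omega⟩ : Fin k) ≠ ⟨1, by omega⟩ := by simp
  have := htwo_le _ _ hne
  have := hgcd _ _ hne
  omega

theorem min_ce_k_ge_four (k : ℕ) (a : Fin k → ℤ) (m : Fin k → ℕ)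
    (hk : 2 ≤ k)
    (hm : ∀ i, 0 < m i)
    (hdisj : ∀ i j, i ≠ j → Disjoint (congClass (a i) (m i)) (congClass (a j) (m j)))
    (hgcd : ∀ i j, i ≠ j → Nat.gcd (m i) (m j) < k)
    (hkmin : ∀ k', 2 ≤ k' → IsCounterexample k' → k ≤ k')
    (hsummin : ∀ (a' : Fin k → ℤ) (m' : Fin k → ℕ),
      (∀ i, 0 < m' i) →
      (∀ i j, i ≠ j → Disjoint (congClass (a' i) (m' i)) (congClass (a' j) (m' j))) →
      (∀ i j, i ≠ j → Nat.gcd (m' i) (m' j) < k) →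
      ∑ i, m i ≤ ∑ i, m' i) :
    4 ≤ k :=
  min_ce_k_ge_four_general k a m hk hm hdisj hgcd
end

section
/- Assume the minimal-counterexample hypothesis. If a prime power q = p^r (p prime, r ≥ 1) divides m_i for some index i, then there exists an index j ≠ i such that q divides m_j. -/
/-! If `p ^ r` divides `m i` but no other modulus, then dividing `m i` by `p` changes none of
the pairwise gcds. Since disjointness of two classes depends only on the gcd of their moduli,
the modified system is again a counterexample, with a smaller sum of moduli. -/

theorem congClass_disjoint_iff {a b : ℤ} {m n : ℕ} :
    Disjoint (congClass a m) (congClass b n) ↔ ¬ (Nat.gcd m n : ℤ) ∣ b - a := by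
  rw [← not_iff_not, not_not, Set.not_disjoint_iff]
  have hm : (Nat.gcd m n : ℤ) ∣ m := Int.natCast_dvd_natCast.mpr (Nat.gcd_dvd_left m n)
  have hn : (Nat.gcd m n : ℤ) ∣ n := Int.natCast_dvd_natCast.mpr (Nat.gcd_dvd_right m n)
  constructor
  · rintro ⟨x, hxa, hxb⟩
    have h : b - a = (b - x) - (a - x) := by ring
    exact h ▸ dvd_sub (hn.trans hxb.dvd) (hm.trans hxa.dvd)
  · rintro ⟨t, ht⟩
    -- Bézout: `gcd m n = m u + n v`, and `a + m u t = b - n v t` lies in both classes.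
    have hbez : (Nat.gcd m n : ℤ) = m * Int.gcdA m n + n * Int.gcdB m n := by
      simpa only [Int.gcd_natCast_natCast] using Int.gcd_eq_gcd_ab m n
    refine ⟨a + m * Int.gcdA m n * t, ?_, ?_⟩
    · exact Int.modEq_iff_dvd.mpr ⟨-(Int.gcdA m n * t), by ring⟩
    · exact Int.modEq_iff_dvd.mpr ⟨Int.gcdB m n * t, by linear_combination ht + t * hbez⟩

theorem Nat.Prime.mul_gcd_dvd_of_pow_dvd_of_not_pow_dvd {p r a b : ℕ} (hp : p.Prime)
    (ha : p ^ r ∣ a) (hb : ¬ p ^ r ∣ b) : p * Nat.gcd a b ∣ a := by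
  obtain ⟨e, he⟩ := Nat.gcd_dvd_left a b
  suffices p ∣ e by
    obtain ⟨f, rfl⟩ := this
    exact ⟨f, he.trans (by ring)⟩
  by_contra hpe
  have hcop : Nat.Coprime (p ^ r) e := ((hp.coprime_iff_not_dvd).mpr hpe).pow_left r
  exact hb ((hcop.dvd_of_dvd_mul_right (he ▸ ha)).trans (Nat.gcd_dvd_right a b))

theorem Nat.Prime.gcd_div_left_of_pow_dvd_of_not_pow_dvd {p r a b : ℕ} (hp : p.Prime)
    (ha : p ^ r ∣ a) (hb : ¬ p ^ r ∣ b) : Nat.gcd (a / p) b = Nat.gcd a b := by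
  have hpgcd := hp.mul_gcd_dvd_of_pow_dvd_of_not_pow_dvd ha hb
  refine Nat.dvd_antisymm ?_ ?_
  · exact Nat.gcd_dvd_gcd_of_dvd_left b (Nat.div_dvd_of_dvd (dvd_of_mul_right_dvd hpgcd))
  · exact Nat.dvd_gcd (Nat.dvd_div_of_mul_dvd hpgcd) (Nat.gcd_dvd_right a b)

theorem gcd_update_of_gcd_eq {ι : Type*} [DecidableEq ι] {m : ι → ℕ} {i : ι} {c : ℕ}
    (h : ∀ j, j ≠ i → Nat.gcd c (m j) = Nat.gcd (m i) (m j)) {j l : ι} (hjl : j ≠ l) :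
    Nat.gcd (Function.update m i c j) (Function.update m i c l) = Nat.gcd (m j) (m l) := by
  rcases eq_or_ne j i with rfl | hj
  · simp only [Function.update_self, Function.update_of_ne hjl.symm, h l hjl.symm]
  rcases eq_or_ne l i with rfl | hl
  · simp only [Function.update_self, Function.update_of_ne hj, Nat.gcd_comm _ c, h j hj,
      Nat.gcd_comm (m l)]
  · simp only [Function.update_of_ne hj, Function.update_of_ne hl]

theorem min_ce_prime_power_shared_general (k : ℕ) (a : Fin k → ℤ) (m : Fin k → ℕ)
    (hm : ∀ i, 0 < m i)
    (hdisj : ∀ i j, i ≠ j → Disjoint (congClass (a i) (m i)) (congClass (a j) (m j)))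
    (hgcd : ∀ i j, i ≠ j → Nat.gcd (m i) (m j) < k)
    (hsummin : ∀ (a' : Fin k → ℤ) (m' : Fin k → ℕ),
      (∀ i, 0 < m' i) →
      (∀ i j, i ≠ j → Disjoint (congClass (a' i) (m' i)) (congClass (a' j) (m' j))) →
      (∀ i j, i ≠ j → Nat.gcd (m' i) (m' j) < k) →
      ∑ i, m i ≤ ∑ i, m' i)
    (p : ℕ) (r : ℕ) (hp : p.Prime) (hr : 1 ≤ r) (i : Fin k) (hdvd : p ^ r ∣ m i) :
    ∃ j, j ≠ i ∧ p ^ r ∣ m j := by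
  by_contra! hcon
  set m' := Function.update m i (m i / p)
  have hgcd' : ∀ j l, j ≠ l → Nat.gcd (m' j) (m' l) = Nat.gcd (m j) (m l) := fun j l =>
    gcd_update_of_gcd_eq fun j hj => hp.gcd_div_left_of_pow_dvd_of_not_pow_dvd hdvd (hcon j hj)
  have hpi : p ∣ m i := (dvd_pow_self p (by omega)).trans hdvd
  have hpos : ∀ j, 0 < m' j := by
    intro j
    rcases eq_or_ne j i with rfl | hj
    · simpa [m'] using Nat.div_pos (Nat.le_of_dvd (hm j) hpi) hp.pos
    · simpa [m', hj] using hm j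
  have hlt : ∑ j, m' j < ∑ j, m j :=
    Fintype.sum_strictMono (update_lt_self_iff.mpr (Nat.div_lt_self (hm i) hp.one_lt))
  refine hlt.not_ge (hsummin a m' hpos (fun j l hjl => ?_)
    (fun j l hjl => hgcd' j l hjl ▸ hgcd j l hjl))
  rw [congClass_disjoint_iff, hgcd' j l hjl, ← congClass_disjoint_iff]
  exact hdisj j l hjl

theorem min_ce_prime_power_shared (k : ℕ) (a : Fin k → ℤ) (m : Fin k → ℕ)
    (hk : 2 ≤ k)
    (hm : ∀ i, 0 < m i)
    (hdisj : ∀ i j, i ≠ j → Disjoint (congClass (a i) (m i)) (congClass (a j) (m j)))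
    (hgcd : ∀ i j, i ≠ j → Nat.gcd (m i) (m j) < k)
    (hkmin : ∀ k', 2 ≤ k' → IsCounterexample k' → k ≤ k')
    (hsummin : ∀ (a' : Fin k → ℤ) (m' : Fin k → ℕ),
      (∀ i, 0 < m' i) →
      (∀ i j, i ≠ j → Disjoint (congClass (a' i) (m' i)) (congClass (a' j) (m' j))) →
      (∀ i j, i ≠ j → Nat.gcd (m' i) (m' j) < k) →
      ∑ i, m i ≤ ∑ i, m' i)
    (p : ℕ) (r : ℕ) (hp : p.Prime) (hr : 1 ≤ r) (i : Fin k) (hdvd : p ^ r ∣ m i) :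
    ∃ j, j ≠ i ∧ p ^ r ∣ m j :=
  min_ce_prime_power_shared_general k a m hm hdisj hgcd hsummin p r hp hr i hdvd
end

section
/- Assume the minimal-counterexample hypothesis. Then at least three of the moduli m_1, …, m_k are multiples of k − 1; that is, there are at least three indices i with (k−1) ∣ m_i. -/
theorem not_disjoint_congClass_of_coprime (a b : ℤ) {m n : ℕ} (hmn : Nat.Coprime m n) :
    ¬ Disjoint (congClass a m) (congClass b n) := by
  obtain ⟨u, v, huv⟩ : IsCoprime (m : ℤ) (n : ℤ) := Nat.isCoprime_iff_coprime.mpr hmn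
  -- Bézout: `u * m + v * n = 1` gives the CRT solution `a * (v * n) + b * (u * m)`.
  refine Set.not_disjoint_iff.mpr ⟨a * (v * n) + b * (u * m), ?_, ?_⟩
  · exact Int.modEq_iff_dvd.mpr ⟨(a - b) * u, by linear_combination -a * huv⟩
  · exact Int.modEq_iff_dvd.mpr ⟨(b - a) * v, by linear_combination -b * huv⟩

theorem isCounterexample_of_succAbove {n : ℕ} (a : Fin (n + 1) → ℤ) (m : Fin (n + 1) → ℕ)
    (i₀ : Fin (n + 1)) (hm : ∀ i, 0 < m i)
    (hdisj : ∀ i j, i ≠ j → Disjoint (congClass (a i) (m i)) (congClass (a j) (m j)))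
    (hgcd : ∀ i j, i ≠ j → i ≠ i₀ → j ≠ i₀ → Nat.gcd (m i) (m j) < n) :
    IsCounterexample n := by
  have hinj := Fin.succAbove_right_injective (p := i₀)
  refine ⟨a ∘ i₀.succAbove, m ∘ i₀.succAbove, fun p => hm _,
    fun p q hpq => hdisj _ _ (hinj.ne hpq), fun p q hpq => ?_⟩
  exact hgcd _ _ (hinj.ne hpq) (Fin.succAbove_ne i₀ p) (Fin.succAbove_ne i₀ q)

theorem Finset.exists_forall_ne_eq_of_card_le_two {α : Type*} [Nonempty α] {s : Finset α}
    (hs : s.card ≤ 2) :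
    ∃ i₀, ∀ i ∈ s, ∀ j ∈ s, i ≠ i₀ → j ≠ i₀ → i = j := by
  classical
  obtain ⟨i₀, hi₀⟩ : ∃ i₀, (s.erase i₀).card ≤ 1 := by
    rcases s.eq_empty_or_nonempty with rfl | ⟨i₀, hi₀⟩
    · exact ⟨Classical.arbitrary α, by simp⟩
    · exact ⟨i₀, by rw [Finset.card_erase_of_mem hi₀]; omega⟩
  exact ⟨i₀, fun i hi j hj hii₀ hji₀ => Finset.card_le_one.mp hi₀ i
    (Finset.mem_erase.mpr ⟨hii₀, hi⟩) j (Finset.mem_erase.mpr ⟨hji₀, hj⟩)⟩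

theorem exists_gcd_lt_of_card_dvd_le_two {n : ℕ} (m : Fin (n + 1) → ℕ)
    (hgcd : ∀ i j, i ≠ j → Nat.gcd (m i) (m j) < n + 1)
    (hcard : (Finset.univ.filter (fun i => n ∣ m i)).card ≤ 2) :
    ∃ i₀, ∀ i j, i ≠ j → i ≠ i₀ → j ≠ i₀ → Nat.gcd (m i) (m j) < n := by
  obtain ⟨i₀, hi₀⟩ := Finset.exists_forall_ne_eq_of_card_le_two hcard
  refine ⟨i₀, fun i j hij hi hj => lt_of_le_of_ne (Nat.le_of_lt_succ (hgcd i j hij)) ?_⟩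
  intro heq
  refine hij (hi₀ i ?_ j ?_ hi hj) <;> simp only [Finset.mem_filter, Finset.mem_univ, true_and]
  · exact heq ▸ Nat.gcd_dvd_left (m i) (m j)
  · exact heq ▸ Nat.gcd_dvd_right (m i) (m j)

theorem min_ce_three_multiples_general (k : ℕ) (a : Fin k → ℤ) (m : Fin k → ℕ)
    (hk : 2 ≤ k)
    (hm : ∀ i, 0 < m i)
    (hdisj : ∀ i j, i ≠ j → Disjoint (congClass (a i) (m i)) (congClass (a j) (m j)))
    (hgcd : ∀ i j, i ≠ j → Nat.gcd (m i) (m j) < k)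
    (hkmin : ∀ k', 2 ≤ k' → IsCounterexample k' → k ≤ k') :
    3 ≤ (Finset.univ.filter (fun i => (k - 1) ∣ m i)).card := by
  obtain ⟨n, rfl⟩ : ∃ n, k = n + 1 := ⟨k - 1, by omega⟩
  have h01 : (⟨0, by omega⟩ : Fin (n + 1)) ≠ ⟨1, by omega⟩ := by simp [Fin.ext_iff]
  have hn : 2 ≤ n := by
    have := two_le_gcd_of_disjoint_congClass (hm _) (hdisj _ _ h01)
    have := hgcd _ _ h01
    omega
  by_contra! hcard
  obtain ⟨i₀, hi₀⟩ :=
    exists_gcd_lt_of_card_dvd_le_two m hgcd (by simpa using Nat.le_of_lt_succ hcard)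
  have := hkmin n hn (isCounterexample_of_succAbove a m i₀ hm hdisj hi₀)
  omega

theorem min_ce_three_multiples (k : ℕ) (a : Fin k → ℤ) (m : Fin k → ℕ)
    (hk : 2 ≤ k)
    (hm : ∀ i, 0 < m i)
    (hdisj : ∀ i j, i ≠ j → Disjoint (congClass (a i) (m i)) (congClass (a j) (m j)))
    (hgcd : ∀ i j, i ≠ j → Nat.gcd (m i) (m j) < k)
    (hkmin : ∀ k', 2 ≤ k' → IsCounterexample k' → k ≤ k')
    (hsummin : ∀ (a' : Fin k → ℤ) (m' : Fin k → ℕ),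
      (∀ i, 0 < m' i) →
      (∀ i j, i ≠ j → Disjoint (congClass (a' i) (m' i)) (congClass (a' j) (m' j))) →
      (∀ i j, i ≠ j → Nat.gcd (m' i) (m' j) < k) →
      ∑ i, m i ≤ ∑ i, m' i) :
    3 ≤ (Finset.univ.filter (fun i => (k - 1) ∣ m i)).card :=
  min_ce_three_multiples_general k a m hk hm hdisj hgcd hkmin
end

section
/- Assume the minimal-counterexample hypothesis, and suppose 7 ≤ k ≤ 30. If p is a prime with 2p ≥ k that divides at least one of the moduli m_1, …, m_k, then p divides exactly two of the moduli; that is, the number of indices i with p ∣ m_i is exactly 2. -/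
open Finset

lemma mem_congClass_iff {a x : ℤ} {m : ℕ} : x ∈ congClass a m ↔ (m : ℤ) ∣ a - x :=
  Int.modEq_iff_dvd

lemma disjoint_congClass_iff {a b : ℤ} {m n : ℕ} :
    Disjoint (congClass a m) (congClass b n) ↔ ¬ ((m.gcd n : ℕ) : ℤ) ∣ a - b := by
  rw [← not_iff_not, not_not, Set.not_disjoint_iff]
  constructor
  · rintro ⟨x, hxa, hxb⟩
    rw [mem_congClass_iff] at hxa hxb
    have hgm := (Int.natCast_dvd_natCast.2 (Nat.gcd_dvd_left m n)).trans hxa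
    have hgn := (Int.natCast_dvd_natCast.2 (Nat.gcd_dvd_right m n)).trans hxb
    simpa using dvd_sub hgm hgn
  · rintro ⟨t, ht⟩
    have hbezout : ((m.gcd n : ℕ) : ℤ) = m * Int.gcdA m n + n * Int.gcdB m n := by
      rw [← Int.gcd_natCast_natCast]; exact Int.gcd_eq_gcd_ab m n
    refine ⟨a - m * Int.gcdA m n * t, ?_, ?_⟩ <;> rw [mem_congClass_iff]
    · exact ⟨Int.gcdA m n * t, by ring⟩
    · exact ⟨-(Int.gcdB m n * t), by linear_combination -ht - t * hbezout⟩

lemma Nat.gcd_ordCompl_left_of_not_dvd {p m n : ℕ} (hp : p.Prime) (hn : ¬ p ∣ n) :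
    (ordCompl[p] m).gcd n = m.gcd n := by
  conv_rhs => rw [← Nat.ordProj_mul_ordCompl_eq_self m p]
  exact (Nat.Coprime.gcd_mul_left_cancel _ (((hp.coprime_iff_not_dvd).2 hn).pow_left _)).symm

lemma Nat.ordCompl_lt_self {p n : ℕ} (hp : p.Prime) (hn : n ≠ 0) (hpn : p ∣ n) :
    ordCompl[p] n < n :=
  Nat.div_lt_self (Nat.pos_of_ne_zero hn)
    (Nat.one_lt_pow (hp.factorization_pos_of_dvd hn hpn).ne' hp.one_lt)

lemma Nat.mul_mul_dvd_of_prime {x y z n : ℕ} (hx : x.Prime) (hy : y.Prime) (hz : z.Prime)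
    (hxy : x ≠ y) (hxz : x ≠ z) (hyz : y ≠ z) (hxn : x ∣ n) (hyn : y ∣ n) (hzn : z ∣ n) :
    x * y * z ∣ n :=
  Nat.Coprime.mul_dvd_of_dvd_of_dvd
    (Nat.Coprime.mul_left ((Nat.coprime_primes hx hz).2 hxz) ((Nat.coprime_primes hy hz).2 hyz))
    (Nat.Coprime.mul_dvd_of_dvd_of_dvd ((Nat.coprime_primes hx hy).2 hxy) hxn hyn) hzn

set_option synthInstance.maxSize 100000 in
lemma Nat.thirty_le_mul_mul_of_prime {x y z : ℕ} (hx : x.Prime) (hy : y.Prime) (hz : z.Prime)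
    (hxy : x ≠ y) (hxz : x ≠ z) (hyz : y ≠ z) : 30 ≤ x * y * z := by
  have hsmall : ∀ x < 8, ∀ y < 8, ∀ z < 8, x.Prime → y.Prime → z.Prime → x * y * z < 30 →
      x = y ∨ x = z ∨ y = z := by
    decide
  by_contra! h
  have h2 := hx.two_le; have h2' := hy.two_le; have h2'' := hz.two_le
  have := hsmall x (by nlinarith [Nat.mul_le_mul h2' h2'']) y
    (by nlinarith [Nat.mul_le_mul h2 h2'']) z (by nlinarith [Nat.mul_le_mul h2 h2']) hx hy hz h
  tauto

lemma Finset.sum_add_card_sdiff_le_sum {ι : Type*} [DecidableEq ι] {R S : Finset ι} {f : ι → ℕ}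
    (hRS : R ⊆ S) (hf : ∀ i ∈ S, 1 ≤ f i) : ∑ i ∈ R, f i + #(S \ R) ≤ ∑ i ∈ S, f i := by
  rw [← sum_sdiff hRS, add_comm]
  gcongr
  simpa using card_nsmul_le_sum (S \ R) f 1 fun i hi => hf i (mem_sdiff.1 hi).1

lemma twentyseven_mul_mul_le_add_pow_three (a b c : ℕ) : 27 * (a * b * c) ≤ (a + b + c) ^ 3 := by
  have ha := Nat.cast_nonneg (α := ℤ) a
  have hb := Nat.cast_nonneg (α := ℤ) b
  have hc := Nat.cast_nonneg (α := ℤ) c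
  zify
  nlinarith [mul_nonneg ha (sq_nonneg ((b : ℤ) - c)), mul_nonneg hb (sq_nonneg ((a : ℤ) - c)),
    mul_nonneg hc (sq_nonneg ((a : ℤ) - b))]

lemma eq_three_of_add_le_nine {a b c : ℕ} (h : a + b + c ≤ 9) (h27 : 27 ≤ a * b * c) :
    a = 3 ∧ b = 3 ∧ c = 3 := by
  have ha : a ≤ 9 := by omega
  have hb : b ≤ 9 := by omega
  interval_cases a <;> interval_cases b <;> omega

set_option synthInstance.maxSize 1000 in
lemma eq_thirty_of_le_add_mul {k s w₁ w₂ w₃ : ℕ} (hk7 : 7 ≤ k) (hk30 : k ≤ 30) (hs : 3 ≤ s)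
    (hsum : w₁ + w₂ + w₃ + (s - 3) < #(Nat.primesBelow k)) (hprod : k ≤ s + w₁ * w₂ * w₃) :
    k = 30 ∧ s = 3 ∧ w₁ = 3 ∧ w₂ = 3 ∧ w₃ = 3 := by
  have hcheck : ∀ k < 31, 7 ≤ k → ∀ u < k, u < #(Nat.primesBelow k) →
      27 * k ≤ 27 * (#(Nat.primesBelow k) + 2 - u) + u ^ 3 → k = 30 ∧ u = 9 := by
    decide
  have hπ : #(Nat.primesBelow k) ≤ k := (card_filter_le _ _).trans_eq (card_range k)
  have hamgm := twentyseven_mul_mul_le_add_pow_three w₁ w₂ w₃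
  obtain ⟨rfl, hu⟩ := hcheck k (by omega) hk7 (w₁ + w₂ + w₃) (by omega) (by omega) (by
    generalize (w₁ + w₂ + w₃) ^ 3 = c at hamgm
    generalize w₁ * w₂ * w₃ = c' at hamgm hprod
    omega)
  have hπ30 : #(Nat.primesBelow 30) = 10 := by decide
  obtain rfl : s = 3 := by omega
  exact ⟨rfl, rfl, eq_three_of_add_le_nine (by omega) (by linarith)⟩

structure IsCounterexampleSystem (k : ℕ) (a : Fin k → ℤ) (m : Fin k → ℕ) : Prop where
  pos : ∀ i, 0 < m i
  disjoint : ∀ i j, i ≠ j → Disjoint (congClass (a i) (m i)) (congClass (a j) (m j))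
  gcd_lt : ∀ i j, i ≠ j → Nat.gcd (m i) (m j) < k

def dvdIndices {k : ℕ} (p : ℕ) (m : Fin k → ℕ) : Finset (Fin k) :=
  univ.filter fun i => p ∣ m i

@[simp]
lemma mem_dvdIndices {k p : ℕ} {m : Fin k → ℕ} {i : Fin k} : i ∈ dvdIndices p m ↔ p ∣ m i := by
  simp [dvdIndices]

def minFacGcd {k : ℕ} (m : Fin k → ℕ) (i j : Fin k) : ℕ :=
  ((m i).gcd (m j)).minFac

lemma minFacGcd_dvd_left {k : ℕ} (m : Fin k → ℕ) (i j : Fin k) : minFacGcd m i j ∣ m i :=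
  (Nat.minFac_dvd _).trans (Nat.gcd_dvd_left _ _)

lemma minFacGcd_dvd_right {k : ℕ} (m : Fin k → ℕ) (i j : Fin k) : minFacGcd m i j ∣ m j :=
  (Nat.minFac_dvd _).trans (Nat.gcd_dvd_right _ _)

def sharedPrimes {k : ℕ} (p : ℕ) (m : Fin k → ℕ) (i : Fin k) : Finset ℕ :=
  (dvdIndices p m)ᶜ.image (minFacGcd m i)

namespace IsCounterexampleSystem

variable {k : ℕ} {a : Fin k → ℤ} {m : Fin k → ℕ} {p : ℕ}

lemma gcd_ne_one (h : IsCounterexampleSystem k a m) {i j : Fin k} (hij : i ≠ j) :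
    (m i).gcd (m j) ≠ 1 := by
  intro h1
  exact disjoint_congClass_iff.1 (h.disjoint i j hij) (by simp [h1])

lemma lt_of_dvd_of_dvd (h : IsCounterexampleSystem k a m) {i j : Fin k} (hij : i ≠ j) {d : ℕ}
    (hi : d ∣ m i) (hj : d ∣ m j) : d < k :=
  (Nat.le_of_dvd (Nat.gcd_pos_of_pos_left _ (h.pos i)) (Nat.dvd_gcd hi hj)).trans_lt
    (h.gcd_lt i j hij)

lemma of_gcd_eq (h : IsCounterexampleSystem k a m) {m' : Fin k → ℕ} (hpos : ∀ i, 0 < m' i)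
    (hgcd : ∀ i j, i ≠ j → (m' i).gcd (m' j) = (m i).gcd (m j)) :
    IsCounterexampleSystem k a m' where
  pos := hpos
  disjoint i j hij := by
    rw [disjoint_congClass_iff, hgcd i j hij, ← disjoint_congClass_iff]
    exact h.disjoint i j hij
  gcd_lt i j hij := hgcd i j hij ▸ h.gcd_lt i j hij

/-- Removing `p` from the only modulus it divides changes no pairwise gcd, so in a system of
minimal total modulus no prime divides exactly one modulus. -/
lemma card_dvdIndices_ne_one (h : IsCounterexampleSystem k a m)
    (hmin : ∀ a' m', IsCounterexampleSystem k a' m' → ∑ i, m i ≤ ∑ i, m' i)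
    (hp : p.Prime) : #(dvdIndices p m) ≠ 1 := by
  intro h1
  obtain ⟨i₀, hi₀⟩ := card_eq_one.1 h1
  have hdvd : p ∣ m i₀ := mem_dvdIndices.1 (hi₀ ▸ mem_singleton_self i₀)
  have hndvd : ∀ j, j ≠ i₀ → ¬ p ∣ m j := fun j hj hpj =>
    hj (mem_singleton.1 (hi₀ ▸ mem_dvdIndices.2 hpj))
  have hgcd : ∀ j, j ≠ i₀ → (ordCompl[p] (m i₀)).gcd (m j) = (m i₀).gcd (m j) := fun j hj =>
    Nat.gcd_ordCompl_left_of_not_dvd hp (hndvd j hj)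
  set m' := Function.update m i₀ (ordCompl[p] (m i₀))
  have hsys : IsCounterexampleSystem k a m' := by
    refine h.of_gcd_eq (fun i => ?_) (fun i j hij => ?_)
    · rcases eq_or_ne i i₀ with rfl | hi
      · simpa [m'] using Nat.ordCompl_pos p (h.pos i).ne'
      · simpa [m', hi] using h.pos i
    · rcases eq_or_ne i i₀ with rfl | hi
      · simpa [m', hij.symm] using hgcd j hij.symm
      · rcases eq_or_ne j i₀ with rfl | hj
        · simpa [m', hi, Nat.gcd_comm] using hgcd i hi
        · simp [m', hi, hj]
  have hlt : ∑ i, m' i < ∑ i, m i := by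
    refine sum_lt_sum (fun i _ => ?_) ⟨i₀, mem_univ _, ?_⟩
    · rcases eq_or_ne i i₀ with rfl | hi
      · simpa [m'] using Nat.ordCompl_le (m i) p
      · simp [m', hi]
    · simpa [m'] using Nat.ordCompl_lt_self hp (h.pos i₀).ne' hdvd
  exact (hmin a m' hsys).not_gt hlt

lemma gcd_eq_of_dvd_of_dvd (h : IsCounterexampleSystem k a m) (hkp : k ≤ 2 * p) {i j : Fin k}
    (hij : i ≠ j) (hi : p ∣ m i) (hj : p ∣ m j) : (m i).gcd (m j) = p :=
  Nat.eq_of_dvd_of_lt_two_mul (Nat.gcd_pos_of_pos_left _ (h.pos i)).ne' (Nat.dvd_gcd hi hj)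
    ((h.gcd_lt i j hij).trans_le hkp)

/-- The classes indexed by `dvdIndices p m` pairwise meet only modulo `p`, so they lie in
distinct residue classes mod `p`. -/
lemma card_dvdIndices_le (h : IsCounterexampleSystem k a m) (hp : p.Prime) (hkp : k ≤ 2 * p) :
    #(dvdIndices p m) ≤ p := by
  have : NeZero p := ⟨hp.ne_zero⟩
  calc #(dvdIndices p m) ≤ #(univ : Finset (ZMod p)) := by
        refine card_le_card_of_injOn (fun i => (a i : ZMod p)) (fun _ _ => mem_univ _) ?_
        intro i hi j hj hij
        by_contra hne
        rw [ZMod.intCast_eq_intCast_iff_dvd_sub] at hij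
        have hdisj := disjoint_congClass_iff.1 (h.disjoint j i (Ne.symm hne))
        rw [h.gcd_eq_of_dvd_of_dvd hkp (Ne.symm hne) (mem_dvdIndices.1 hj)
          (mem_dvdIndices.1 hi)] at hdisj
        exact hdisj hij
    _ = p := by simp

lemma prime_lt (h : IsCounterexampleSystem k a m) (hS : 2 ≤ #(dvdIndices p m)) : p < k := by
  obtain ⟨i, hi, j, hj, hij⟩ := one_lt_card.1 hS
  exact h.lt_of_dvd_of_dvd hij (mem_dvdIndices.1 hi) (mem_dvdIndices.1 hj)

lemma compl_dvdIndices_nonempty (h : IsCounterexampleSystem k a m) (hp : p.Prime)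
    (hkp : k ≤ 2 * p) (hS : 2 ≤ #(dvdIndices p m)) : (dvdIndices p m)ᶜ.Nonempty := by
  rw [nonempty_iff_ne_empty, Ne, compl_eq_empty_iff]
  intro huniv
  have hle := h.card_dvdIndices_le hp hkp
  rw [huniv, card_univ, Fintype.card_fin] at hle
  exact (h.prime_lt hS).not_ge hle

lemma minFacGcd_prime (h : IsCounterexampleSystem k a m) {i j : Fin k} (hij : i ≠ j) :
    (minFacGcd m i j).Prime :=
  Nat.minFac_prime (h.gcd_ne_one hij)

lemma minFacGcd_mem (h : IsCounterexampleSystem k a m) {i j : Fin k} (hi : p ∣ m i)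
    (hj : ¬ p ∣ m j) : minFacGcd m i j ∈ (Nat.primesBelow k).erase p := by
  have hij : i ≠ j := by rintro rfl; exact hj hi
  refine mem_erase.2 ⟨fun hq => hj (hq ▸ minFacGcd_dvd_right m i j), Nat.mem_primesBelow.2 ⟨?_, ?_⟩⟩
  · exact h.lt_of_dvd_of_dvd hij (minFacGcd_dvd_left m i j) (minFacGcd_dvd_right m i j)
  · exact h.minFacGcd_prime hij

lemma minFacGcd_ne (h : IsCounterexampleSystem k a m) (hp : p.Prime) (hkp : k ≤ 2 * p)
    {i i' j j' : Fin k} (hii' : i ≠ i') (hi : p ∣ m i) (hi' : p ∣ m i') (hj : ¬ p ∣ m j) :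
    minFacGcd m i j ≠ minFacGcd m i' j' := by
  intro heq
  have hij : i ≠ j := by rintro rfl; exact hj hi
  have hdvd : minFacGcd m i j ∣ p := h.gcd_eq_of_dvd_of_dvd hkp hii' hi hi' ▸
    Nat.dvd_gcd (minFacGcd_dvd_left m i j) (heq ▸ minFacGcd_dvd_left m i' j')
  have hq : minFacGcd m i j = p := (Nat.prime_dvd_prime_iff_eq (h.minFacGcd_prime hij) hp).1 hdvd
  exact hj (hq ▸ minFacGcd_dvd_right m i j)

lemma pairwiseDisjoint_sharedPrimes (h : IsCounterexampleSystem k a m) (hp : p.Prime)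
    (hkp : k ≤ 2 * p) : (dvdIndices p m : Set (Fin k)).PairwiseDisjoint (sharedPrimes p m) := by
  intro i hi i' hi' hii'
  rw [Function.onFun, disjoint_left]
  simp only [sharedPrimes, mem_image, mem_compl, mem_dvdIndices]
  rintro _ ⟨j, hj, rfl⟩ ⟨j', -, heq⟩
  exact h.minFacGcd_ne hp hkp hii' (mem_dvdIndices.1 hi) (mem_dvdIndices.1 hi') hj heq.symm

lemma biUnion_sharedPrimes_subset (h : IsCounterexampleSystem k a m) :
    (dvdIndices p m).biUnion (sharedPrimes p m) ⊆ (Nat.primesBelow k).erase p := by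
  simp only [biUnion_subset, sharedPrimes, image_subset_iff, mem_compl, mem_dvdIndices]
  exact fun i hi j hj => h.minFacGcd_mem hi hj

lemma sum_card_sharedPrimes_lt (h : IsCounterexampleSystem k a m) (hp : p.Prime)
    (hkp : k ≤ 2 * p) (hS : 2 ≤ #(dvdIndices p m)) :
    ∑ i ∈ dvdIndices p m, #(sharedPrimes p m i) < #(Nat.primesBelow k) := by
  rw [← card_biUnion (h.pairwiseDisjoint_sharedPrimes hp hkp)]
  exact (card_le_card h.biUnion_sharedPrimes_subset).trans_lt
    (card_erase_lt_of_mem (Nat.mem_primesBelow.2 ⟨h.prime_lt hS, hp⟩))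

section Triple

variable {i₁ i₂ i₃ : Fin k}

/-- Two moduli not divisible by `p` with the same triple of `minFacGcd`s share three distinct
primes, whose product is at least `30`. -/
lemma injOn_minFacGcd_triple (h : IsCounterexampleSystem k a m) (hp : p.Prime) (hkp : k ≤ 2 * p)
    (hk30 : k ≤ 30) (h₁₂ : i₁ ≠ i₂) (h₁₃ : i₁ ≠ i₃) (h₂₃ : i₂ ≠ i₃)
    (h₁ : p ∣ m i₁) (h₂ : p ∣ m i₂) (h₃ : p ∣ m i₃) :
    Set.InjOn (fun j => (minFacGcd m i₁ j, minFacGcd m i₂ j, minFacGcd m i₃ j))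
      ((dvdIndices p m)ᶜ : Finset (Fin k)) := by
  intro j hj j' _ heq
  simp only [coe_compl, Set.mem_compl_iff, mem_coe, mem_dvdIndices] at hj
  simp only [Prod.mk.injEq] at heq
  obtain ⟨e₁, e₂, e₃⟩ := heq
  by_contra hne
  have hne' : ∀ {i}, p ∣ m i → i ≠ j := by rintro i hi rfl; exact hj hi
  have hp₁ := h.minFacGcd_prime (hne' h₁)
  have hp₂ := h.minFacGcd_prime (hne' h₂)
  have hp₃ := h.minFacGcd_prime (hne' h₃)
  have hn₁₂ := h.minFacGcd_ne hp hkp h₁₂ h₁ h₂ hj (j' := j)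
  have hn₁₃ := h.minFacGcd_ne hp hkp h₁₃ h₁ h₃ hj (j' := j)
  have hn₂₃ := h.minFacGcd_ne hp hkp h₂₃ h₂ h₃ hj (j' := j)
  have hlt := h.lt_of_dvd_of_dvd hne
    (Nat.mul_mul_dvd_of_prime hp₁ hp₂ hp₃ hn₁₂ hn₁₃ hn₂₃ (minFacGcd_dvd_right m i₁ j)
      (minFacGcd_dvd_right m i₂ j) (minFacGcd_dvd_right m i₃ j))
    (Nat.mul_mul_dvd_of_prime hp₁ hp₂ hp₃ hn₁₂ hn₁₃ hn₂₃ (e₁ ▸ minFacGcd_dvd_right m i₁ j')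
      (e₂ ▸ minFacGcd_dvd_right m i₂ j') (e₃ ▸ minFacGcd_dvd_right m i₃ j'))
  have h30 := Nat.thirty_le_mul_mul_of_prime hp₁ hp₂ hp₃ hn₁₂ hn₁₃ hn₂₃
  omega

lemma mapsTo_minFacGcd_triple :
    Set.MapsTo (fun j => (minFacGcd m i₁ j, minFacGcd m i₂ j, minFacGcd m i₃ j))
      ((dvdIndices p m)ᶜ : Finset (Fin k))
      (sharedPrimes p m i₁ ×ˢ sharedPrimes p m i₂ ×ˢ sharedPrimes p m i₃ : Finset _) := by
  intro j hj
  simp only [mem_coe, mem_product, sharedPrimes] at hj ⊢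
  exact ⟨mem_image_of_mem _ hj, mem_image_of_mem _ hj, mem_image_of_mem _ hj⟩

lemma card_compl_dvdIndices_le_mul (h : IsCounterexampleSystem k a m) (hp : p.Prime)
    (hkp : k ≤ 2 * p) (hk30 : k ≤ 30) (h₁₂ : i₁ ≠ i₂) (h₁₃ : i₁ ≠ i₃) (h₂₃ : i₂ ≠ i₃)
    (h₁ : p ∣ m i₁) (h₂ : p ∣ m i₂) (h₃ : p ∣ m i₃) :
    #(dvdIndices p m)ᶜ ≤
      #(sharedPrimes p m i₁) * #(sharedPrimes p m i₂) * #(sharedPrimes p m i₃) := by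
  have := card_le_card_of_injOn _ mapsTo_minFacGcd_triple
    (h.injOn_minFacGcd_triple hp hkp hk30 h₁₂ h₁₃ h₂₃ h₁ h₂ h₃)
  rwa [card_product, card_product, ← mul_assoc] at this

/-- If the triple map is onto, two moduli not divisible by `p` share `x` together with any
prime `y` of the second factor, but `x * y ≥ 2 * x ≥ k`. -/
lemma card_compl_dvdIndices_lt_mul (h : IsCounterexampleSystem k a m) (hp : p.Prime)
    (hkp : k ≤ 2 * p) (hk30 : k ≤ 30) (h₁₂ : i₁ ≠ i₂) (h₁₃ : i₁ ≠ i₃) (h₂₃ : i₂ ≠ i₃)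
    (h₁ : p ∣ m i₁) (h₂ : p ∣ m i₂) (h₃ : p ∣ m i₃)
    (hQ₂ : (sharedPrimes p m i₂).Nonempty) (hQ₃ : 1 < #(sharedPrimes p m i₃))
    {x : ℕ} (hx : x ∈ sharedPrimes p m i₁) (hxk : k ≤ 2 * x) :
    #(dvdIndices p m)ᶜ <
      #(sharedPrimes p m i₁) * #(sharedPrimes p m i₂) * #(sharedPrimes p m i₃) := by
  by_contra! hle
  obtain ⟨y, hy⟩ := hQ₂
  obtain ⟨z, hz, z', hz', hzz'⟩ := one_lt_card.1 hQ₃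
  have hinj := h.injOn_minFacGcd_triple hp hkp hk30 h₁₂ h₁₃ h₂₃ h₁ h₂ h₃
  have hsurj := surj_on_of_inj_on_of_card_le _ (fun j hj => mapsTo_minFacGcd_triple hj)
    (fun j j' hj hj' heq => hinj hj hj' heq)
    (by rwa [card_product, card_product, ← mul_assoc])
  obtain ⟨j, hj, hτ⟩ := hsurj (x, y, z) (by simp [hx, hy, hz])
  obtain ⟨j', hj', hτ'⟩ := hsurj (x, y, z') (by simp [hx, hy, hz'])
  simp only [Prod.mk.injEq] at hτ hτ'
  obtain ⟨rfl, rfl, rfl⟩ := hτ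
  obtain ⟨ex, ey, rfl⟩ := hτ'
  have hne : j ≠ j' := by rintro rfl; exact hzz' rfl
  rw [mem_compl, mem_dvdIndices] at hj
  have hne' : ∀ {i}, p ∣ m i → i ≠ j := by rintro i hi rfl; exact hj hi
  have hxp := h.minFacGcd_prime (hne' h₁)
  have hyp := h.minFacGcd_prime (hne' h₂)
  have hcop := (Nat.coprime_primes hxp hyp).2 (h.minFacGcd_ne hp hkp h₁₂ h₁ h₂ hj)
  have hlt := h.lt_of_dvd_of_dvd hne
    (hcop.mul_dvd_of_dvd_of_dvd (minFacGcd_dvd_right m i₁ j) (minFacGcd_dvd_right m i₂ j))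
    (hcop.mul_dvd_of_dvd_of_dvd (ex ▸ minFacGcd_dvd_right m i₁ j')
      (ey ▸ minFacGcd_dvd_right m i₂ j'))
  nlinarith [hyp.two_le]

end Triple

/-- With `k = 30` and three sets of three shared primes, the sets exhaust the nine primes below
`30` other than `p`, so one of them contains `17` or `19`. -/
lemma false_of_card_sharedPrimes_eq_three (h : IsCounterexampleSystem k a m) (hp : p.Prime)
    (hkp : k ≤ 2 * p) (hk : k = 30) (hS : #(dvdIndices p m) = 3)
    (hQ : ∀ i ∈ dvdIndices p m, #(sharedPrimes p m i) = 3) : False := by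
  subst hk
  have hcover : (dvdIndices p m).biUnion (sharedPrimes p m) = (Nat.primesBelow 30).erase p := by
    refine eq_of_subset_of_card_le h.biUnion_sharedPrimes_subset ?_
    rw [card_biUnion (h.pairwiseDisjoint_sharedPrimes hp hkp), sum_congr rfl hQ, sum_const, hS,
      card_erase_of_mem (Nat.mem_primesBelow.2 ⟨h.prime_lt (by omega), hp⟩),
      show #(Nat.primesBelow 30) = 10 by decide]
    rfl
  obtain ⟨x, hxP, hx⟩ : ∃ x ∈ (Nat.primesBelow 30).erase p, 15 ≤ x := by
    rcases eq_or_ne p 17 with rfl | hp17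
    · exact ⟨19, by decide, by norm_num⟩
    · exact ⟨17, mem_erase.2 ⟨hp17.symm, by decide⟩, by norm_num⟩
  rw [← hcover, mem_biUnion] at hxP
  obtain ⟨i, hi, hxi⟩ := hxP
  obtain ⟨i', i'', hi'i'', hpair⟩ :=
    card_eq_two.1 (show #((dvdIndices p m).erase i) = 2 by rw [card_erase_of_mem hi, hS])
  have hi' : i' ∈ (dvdIndices p m).erase i := hpair ▸ mem_insert_self _ _
  have hi'' : i'' ∈ (dvdIndices p m).erase i := hpair ▸ mem_insert_of_mem (mem_singleton_self _)
  rw [mem_erase] at hi' hi''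
  have hlt := h.card_compl_dvdIndices_lt_mul hp hkp le_rfl hi'.1.symm hi''.1.symm hi'i''
    (mem_dvdIndices.1 hi) (mem_dvdIndices.1 hi'.2) (mem_dvdIndices.1 hi''.2)
    (card_pos.1 (by rw [hQ i' hi'.2]; norm_num)) (by rw [hQ i'' hi''.2]; norm_num) hxi (by omega)
  rw [hQ i hi, hQ i' hi'.2, hQ i'' hi''.2, card_compl, Fintype.card_fin, hS] at hlt
  omega

lemma card_dvdIndices_le_two (h : IsCounterexampleSystem k a m) (hp : p.Prime)
    (hkp : k ≤ 2 * p) (hk7 : 7 ≤ k) (hk30 : k ≤ 30) : #(dvdIndices p m) ≤ 2 := by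
  by_contra! hS
  obtain ⟨R, hRS, hR⟩ := exists_subset_card_eq (show 3 ≤ #(dvdIndices p m) from hS)
  obtain ⟨i₁, i₂, i₃, h₁₂, h₁₃, h₂₃, rfl⟩ := card_eq_three.1 hR
  have hdvd : ∀ i ∈ ({i₁, i₂, i₃} : Finset _), p ∣ m i := fun i hi => mem_dvdIndices.1 (hRS hi)
  have hQ : ∀ i ∈ dvdIndices p m, 1 ≤ #(sharedPrimes p m i) := fun i _ =>
    card_pos.2 ((h.compl_dvdIndices_nonempty hp hkp (by omega)).image _)
  have hsum := sum_add_card_sdiff_le_sum hRS hQ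
  rw [sum_insert (by simp [h₁₂, h₁₃]), sum_pair h₂₃, card_sdiff_of_subset hRS, hR] at hsum
  have hprod := h.card_compl_dvdIndices_le_mul hp hkp hk30 h₁₂ h₁₃ h₂₃
    (hdvd _ (by simp)) (hdvd _ (by simp)) (hdvd _ (by simp))
  have hπ := h.sum_card_sharedPrimes_lt hp hkp (by omega)
  rw [card_compl, Fintype.card_fin] at hprod
  obtain ⟨rfl, hs, hw₁, hw₂, hw₃⟩ := eq_thirty_of_le_add_mul (w₁ := #(sharedPrimes p m i₁))
    (w₂ := #(sharedPrimes p m i₂)) (w₃ := #(sharedPrimes p m i₃)) hk7 hk30 hS (by omega) (by omega)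
  have hRS' := eq_of_subset_of_card_le hRS (by omega)
  refine h.false_of_card_sharedPrimes_eq_three hp hkp rfl hs fun i hi => ?_
  rw [← hRS', mem_insert, mem_insert, mem_singleton] at hi
  rcases hi with rfl | rfl | rfl <;> assumption

end IsCounterexampleSystem

theorem min_ce_big_prime_general (k : ℕ) (a : Fin k → ℤ) (m : Fin k → ℕ)
    (hm : ∀ i, 0 < m i)
    (hdisj : ∀ i j, i ≠ j → Disjoint (congClass (a i) (m i)) (congClass (a j) (m j)))
    (hgcd : ∀ i j, i ≠ j → Nat.gcd (m i) (m j) < k)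
    (hsummin : ∀ (a' : Fin k → ℤ) (m' : Fin k → ℕ),
      (∀ i, 0 < m' i) →
      (∀ i j, i ≠ j → Disjoint (congClass (a' i) (m' i)) (congClass (a' j) (m' j))) →
      (∀ i j, i ≠ j → Nat.gcd (m' i) (m' j) < k) →
      ∑ i, m i ≤ ∑ i, m' i)
    (hk7 : 7 ≤ k) (hk30 : k ≤ 30) (p : ℕ) (hp : p.Prime) (hp2 : k ≤ 2 * p)
    (hex : ∃ i, p ∣ m i) :
    (Finset.univ.filter (fun i => p ∣ m i)).card = 2 := by
  have h : IsCounterexampleSystem k a m := ⟨hm, hdisj, hgcd⟩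
  have hne : #(dvdIndices p m) ≠ 1 :=
    h.card_dvdIndices_ne_one (fun a' m' h' => hsummin a' m' h'.pos h'.disjoint h'.gcd_lt) hp
  have hle := h.card_dvdIndices_le_two hp hp2 hk7 hk30
  obtain ⟨i, hi⟩ := hex
  have hpos : 0 < #(dvdIndices p m) := card_pos.2 ⟨i, mem_dvdIndices.2 hi⟩
  change #(dvdIndices p m) = 2
  omega

theorem min_ce_big_prime (k : ℕ) (a : Fin k → ℤ) (m : Fin k → ℕ)
    (hk : 2 ≤ k)
    (hm : ∀ i, 0 < m i)
    (hdisj : ∀ i j, i ≠ j → Disjoint (congClass (a i) (m i)) (congClass (a j) (m j)))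
    (hgcd : ∀ i j, i ≠ j → Nat.gcd (m i) (m j) < k)
    (hkmin : ∀ k', 2 ≤ k' → IsCounterexample k' → k ≤ k')
    (hsummin : ∀ (a' : Fin k → ℤ) (m' : Fin k → ℕ),
      (∀ i, 0 < m' i) →
      (∀ i j, i ≠ j → Disjoint (congClass (a' i) (m' i)) (congClass (a' j) (m' j))) →
      (∀ i j, i ≠ j → Nat.gcd (m' i) (m' j) < k) →
      ∑ i, m i ≤ ∑ i, m' i)
    (hk7 : 7 ≤ k) (hk30 : k ≤ 30) (p : ℕ) (hp : p.Prime) (hp2 : k ≤ 2 * p)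
    (hex : ∃ i, p ∣ m i) :
    (Finset.univ.filter (fun i => p ∣ m i)).card = 2 :=
  min_ce_big_prime_general k a m hm hdisj hgcd hsummin hk7 hk30 p hp hp2 hex
end
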